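/- (Strengthened in-weight criterion, generalizing Lemma 5 of the paper.) Assume that every u ∈ F admits a path from v0 to u, all of whose vertices lie in F, whose cost equals cost u. Let k ∉ F be a vertex such that D k ≤ (⨅ {D y : y ∉ F}) + (⨅ {w v k : E v k ∧ v ∉ F}), where the second infimum is over in-edges of k coming from unfixed vertices. Then D k = cost k. -/

import Mathlib

/-!
Take a path `p` to `k` that is not an `F`-path and let `v` be its penultimate vertex. If
`v ∈ F`, an optimal `F`-path to `v` followed by the edge `v → k` is an `F`-path to `k` costing at
most `p`. If `v ∉ F`, the prefix of `p` up to its first unfixed vertex `y` is an `F`-path, so the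
part of `p` before `k` costs at least `D y`, while its last edge costs at least the infimum of the
unfixed in-weights of `k`.
-/

open scoped ENNReal

variable {V : Type*}

/-- `IsPath E v0 x p` means `p` is a finite sequence of vertices starting at `v0`,
ending at `x`, with consecutive vertices joined by edges of `E`. -/
def IsPath (E : V → V → Prop) (v0 x : V) (p : List V) : Prop :=
  p.Chain' E ∧ p.head? = some v0 ∧ p.getLast? = some x

/-- The cost of a path: the sum of the weights of its consecutive edges. -/
noncomputable def pathCost (w : V → V → ℝ≥0∞) (p : List V) : ℝ≥0∞ :=
  ((p.zip p.tail).map fun q => w q.1 q.2).sum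

/-- `cost E w v0 x` : the infimum of the costs of all paths from `v0` to `x`
(`∞` if `x` is unreachable from `v0`). -/
noncomputable def cost (E : V → V → Prop) (w : V → V → ℝ≥0∞) (v0 x : V) : ℝ≥0∞ :=
  ⨅ p : {p : List V // IsPath E v0 x p}, pathCost w p.1

/-- An `F`-path from `v0` to `x` : a path all of whose vertices other than the
final vertex `x` lie in `F`. `Dfun E w v0 F x` is the infimum of the costs of
`F`-paths from `v0` to `x` (`∞` if no `F`-path to `x` exists). -/
noncomputable def Dfun (E : V → V → Prop) (w : V → V → ℝ≥0∞) (v0 : V) (F : Set V)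
    (x : V) : ℝ≥0∞ :=
  ⨅ p : {p : List V // IsPath E v0 x p ∧ ∀ v ∈ p.dropLast, v ∈ F}, pathCost w p.1

section
variable {E : V → V → Prop} {w : V → V → ℝ≥0∞} {v0 : V} {F : Set V}

lemma pathCost_cons_cons (w : V → V → ℝ≥0∞) (a b : V) (l : List V) :
    pathCost w (a :: b :: l) = w a b + pathCost w (b :: l) := by
  simp [pathCost]

lemma pathCost_append_singleton (w : V → V → ℝ≥0∞) :
    ∀ {q : List V} {v : V} (x : V), q.getLast? = some v →
      pathCost w (q ++ [x]) = pathCost w q + w v x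
  | [], _, _, h => by simp at h
  | [a], v, x, h => by
    obtain rfl : a = v := by simpa using h
    simp [pathCost]
  | a :: b :: l, v, x, h => by
    rw [List.cons_append, List.cons_append, pathCost_cons_cons, pathCost_cons_cons,
      ← List.cons_append, pathCost_append_singleton w x (by simpa using h), add_assoc]

lemma isPath_append_singleton_iff {q : List V} {v x : V} (hq : q.getLast? = some v) :
    IsPath E v0 x (q ++ [x]) ↔ IsPath E v0 v q ∧ E v x := by
  have hne : q ≠ [] := by rintro rfl; simp at hq
  simp only [IsPath, List.Chain', List.isChain_append, List.head?_append_of_ne_nil _ hne]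
  simp [hq]
  tauto

lemma cost_le_pathCost {x : V} {p : List V} (hp : IsPath E v0 x p) :
    cost E w v0 x ≤ pathCost w p :=
  iInf_le_of_le ⟨p, hp⟩ le_rfl

lemma Dfun_le_pathCost {x : V} {p : List V} (hp : IsPath E v0 x p)
    (hpF : ∀ u ∈ p.dropLast, u ∈ F) : Dfun E w v0 F x ≤ pathCost w p :=
  iInf_le_of_le ⟨p, hp, hpF⟩ le_rfl

lemma cost_le_Dfun {x : V} : cost E w v0 x ≤ Dfun E w v0 F x :=
  le_iInf fun p => cost_le_pathCost p.2.1

lemma Dfun_le_cost_add {v x : V}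
    (hv : ∃ p : List V, IsPath E v0 v p ∧ (∀ u ∈ p, u ∈ F) ∧ pathCost w p = cost E w v0 v)
    (hvx : E v x) : Dfun E w v0 F x ≤ cost E w v0 v + w v x := by
  obtain ⟨p, hp, hpF, hcost⟩ := hv
  calc Dfun E w v0 F x
      ≤ pathCost w (p ++ [x]) :=
        Dfun_le_pathCost ((isPath_append_singleton_iff hp.2.2).2 ⟨hp, hvx⟩)
          (by rwa [List.dropLast_concat])
    _ = cost E w v0 v + w v x := by rw [pathCost_append_singleton w x hp.2.2, hcost]

/-- The prefix of `p` ending at its first vertex outside `F` is an `F`-path. -/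
lemma exists_notMem_Dfun_le_pathCost {p : List V} :
    ∀ {x : V}, IsPath E v0 x p → (∃ u ∈ p, u ∉ F) →
      ∃ y ∉ F, Dfun E w v0 F y ≤ pathCost w p := by
  induction p using List.reverseRecOn with
  | nil => simp
  | append_singleton q x ih =>
    intro x' hp hunfixed
    obtain rfl : x = x' := by simpa using hp.2.2
    by_cases hq : ∃ u ∈ q, u ∉ F
    · obtain ⟨v, hv⟩ : ∃ v, q.getLast? = some v :=
        ⟨_, List.getLast?_eq_some_getLast (by rintro rfl; simp at hq)⟩
      obtain ⟨y, hy, hDy⟩ := ih ((isPath_append_singleton_iff hv).1 hp).1 hq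
      exact ⟨y, hy, hDy.trans (by rw [pathCost_append_singleton w x hv]; exact le_self_add)⟩
    · push Not at hq
      have hx : x ∉ F := by
        obtain ⟨u, hu, huF⟩ := hunfixed
        rcases List.mem_append.1 hu with hu | hu
        · exact absurd (hq u hu) huF
        · rwa [List.mem_singleton.1 hu] at huF
      exact ⟨x, hx, Dfun_le_pathCost hp (by rwa [List.dropLast_concat])⟩

end

theorem in_weight_criterion_unfixed_general (E : V → V → Prop) (w : V → V → ℝ≥0∞)
    (v0 : V) (F : Set V)
    (hF : ∀ u ∈ F, ∃ p : List V, IsPath E v0 u p ∧ (∀ v ∈ p, v ∈ F) ∧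
      pathCost w p = cost E w v0 u)
    (k : V)
    (hD : Dfun E w v0 F k ≤
      (⨅ y : {y : V // y ∉ F}, Dfun E w v0 F y.1) +
      (⨅ v : {v : V // E v k ∧ v ∉ F}, w v.1 k)) :
    Dfun E w v0 F k = cost E w v0 k := by
  refine le_antisymm (le_iInf fun ⟨p, hp⟩ => ?_) cost_le_Dfun
  by_cases hfixed : ∀ u ∈ p.dropLast, u ∈ F
  · exact Dfun_le_pathCost hp hfixed
  push Not at hfixed
  obtain ⟨q, rfl⟩ := List.getLast?_eq_some_iff.1 hp.2.2
  rw [List.dropLast_concat] at hfixed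
  obtain ⟨v, hv⟩ : ∃ v, q.getLast? = some v :=
    ⟨_, List.getLast?_eq_some_getLast (by rintro rfl; simp at hfixed)⟩
  obtain ⟨hq, hvk⟩ := (isPath_append_singleton_iff hv).1 hp
  change Dfun E w v0 F k ≤ pathCost w (q ++ [k])
  rw [pathCost_append_singleton w k hv]
  by_cases hvF : v ∈ F
  · exact (Dfun_le_cost_add (hF v hvF) hvk).trans (add_le_add_left (cost_le_pathCost hq) _)
  · obtain ⟨y, hy, hDy⟩ := exists_notMem_Dfun_le_pathCost hq hfixed
    calc Dfun E w v0 F k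
        ≤ (⨅ y : {y : V // y ∉ F}, Dfun E w v0 F y.1) +
          (⨅ v : {v : V // E v k ∧ v ∉ F}, w v.1 k) := hD
      _ ≤ pathCost w q + w v k :=
        add_le_add (iInf_le_of_le ⟨y, hy⟩ hDy) (iInf_le_of_le ⟨v, hvk, hvF⟩ le_rfl)

/-- Strengthened in-weight criterion (generalizing Lemma 5): with the second infimum
taken only over in-edges of `k` coming from unfixed vertices. -/
theorem in_weight_criterion_unfixed [Fintype V] (E : V → V → Prop) (w : V → V → ℝ≥0∞)
    (hpos : ∀ u v, E u v → 0 < w u v) (hfin : ∀ u v, E u v → w u v < ⊤)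
    (v0 : V) (F : Set V) (hv0 : v0 ∈ F)
    (hF : ∀ u ∈ F, ∃ p : List V, IsPath E v0 u p ∧ (∀ v ∈ p, v ∈ F) ∧
      pathCost w p = cost E w v0 u)
    (k : V) (hk : k ∉ F)
    (hD : Dfun E w v0 F k ≤
      (⨅ y : {y : V // y ∉ F}, Dfun E w v0 F y.1) +
      (⨅ v : {v : V // E v k ∧ v ∉ F}, w v.1 k)) :
    Dfun E w v0 F k = cost E w v0 k :=
  in_weight_criterion_unfixed_general E w v0 F hF k hD
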